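/- The derivative identity \frac{d}{dr}[R_{n+1}^{m+1}(r) - R_{n-1}^{m+1}(r)] = (n+1)[R_n^m(r) + R_n^{m+2}(r)] holds for all r, for admissible indices with m + 2 \le n. -/

import Mathlib

open scoped Real BigOperators

/-- Radial part of the Zernike polynomial. -/
noncomputable def Rz (n m : ℕ) (r : ℝ) : ℝ :=
  ∑ ℓ ∈ Finset.range ((n - m) / 2 + 1),
    (-1 : ℝ) ^ ℓ * (Nat.factorial (n - ℓ) : ℝ) /
      ((Nat.factorial ℓ : ℝ) * (Nat.factorial ((n - m) / 2 - ℓ) : ℝ) *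
        (Nat.factorial ((n + m) / 2 - ℓ) : ℝ)) *
      r ^ (n - 2 * ℓ)

lemma Rz_eq (n m k p : ℕ) (h1 : (n - m) / 2 = k) (h2 : (n + m) / 2 = p) (r : ℝ) :
    Rz n m r = ∑ ℓ ∈ Finset.range (k + 1),
      (-1 : ℝ) ^ ℓ * (Nat.factorial (n - ℓ) : ℝ) /
        ((Nat.factorial ℓ : ℝ) * (Nat.factorial (k - ℓ) : ℝ) * (Nat.factorial (p - ℓ) : ℝ)) *
        r ^ (n - 2 * ℓ) := by
  subst h1 h2; rfl

lemma hne_fact : ∀ k : ℕ, ((Nat.factorial k : ℝ)) ≠ 0 := fun k =>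
  Nat.cast_ne_zero.mpr k.factorial_ne_zero

lemma key (m j : ℕ) (r : ℝ) :
    deriv (fun s => Rz (m+2*j+3) (m+1) s - Rz (m+2*j+1) (m+1) s) r =
      ((m : ℝ)+2*j+3) * (Rz (m+2*j+2) m r + Rz (m+2*j+2) (m+2) r) := by
  have hf : (fun s => Rz (m+2*j+3) (m+1) s - Rz (m+2*j+1) (m+1) s)
      = fun s : ℝ =>
        (∑ ℓ ∈ Finset.range (j+1+1),
          (-1 : ℝ) ^ ℓ * (Nat.factorial (m+2*j+3 - ℓ) : ℝ) /
            ((Nat.factorial ℓ : ℝ) * (Nat.factorial (j+1 - ℓ) : ℝ) * (Nat.factorial (m+j+2 - ℓ) : ℝ)) *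
            s ^ (m+2*j+3 - 2 * ℓ))
        - (∑ ℓ ∈ Finset.range (j+1),
          (-1 : ℝ) ^ ℓ * (Nat.factorial (m+2*j+1 - ℓ) : ℝ) /
            ((Nat.factorial ℓ : ℝ) * (Nat.factorial (j - ℓ) : ℝ) * (Nat.factorial (m+j+1 - ℓ) : ℝ)) *
            s ^ (m+2*j+1 - 2 * ℓ)) := by
    funext s
    rw [Rz_eq (m+2*j+3) (m+1) (j+1) (m+j+2) (by omega) (by omega),
        Rz_eq (m+2*j+1) (m+1) j (m+j+1) (by omega) (by omega)]
  have hD : HasDerivAt (fun s => Rz (m+2*j+3) (m+1) s - Rz (m+2*j+1) (m+1) s)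
      ((∑ ℓ ∈ Finset.range (j+1+1),
          (-1 : ℝ) ^ ℓ * (Nat.factorial (m+2*j+3 - ℓ) : ℝ) /
            ((Nat.factorial ℓ : ℝ) * (Nat.factorial (j+1 - ℓ) : ℝ) * (Nat.factorial (m+j+2 - ℓ) : ℝ)) *
            (((m+2*j+3 - 2 * ℓ : ℕ) : ℝ) * r ^ (m+2*j+3 - 2 * ℓ - 1)))
        - (∑ ℓ ∈ Finset.range (j+1),
          (-1 : ℝ) ^ ℓ * (Nat.factorial (m+2*j+1 - ℓ) : ℝ) /
            ((Nat.factorial ℓ : ℝ) * (Nat.factorial (j - ℓ) : ℝ) * (Nat.factorial (m+j+1 - ℓ) : ℝ)) *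
            (((m+2*j+1 - 2 * ℓ : ℕ) : ℝ) * r ^ (m+2*j+1 - 2 * ℓ - 1)))) r := by
    rw [hf]
    exact HasDerivAt.sub
      (HasDerivAt.fun_sum fun ℓ _ => (hasDerivAt_pow _ r).const_mul _)
      (HasDerivAt.fun_sum fun ℓ _ => (hasDerivAt_pow _ r).const_mul _)
  have hL : (∑ ℓ ∈ Finset.range (j+1+1),
          (-1 : ℝ) ^ ℓ * (Nat.factorial (m+2*j+3 - ℓ) : ℝ) /
            ((Nat.factorial ℓ : ℝ) * (Nat.factorial (j+1 - ℓ) : ℝ) * (Nat.factorial (m+j+2 - ℓ) : ℝ)) *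
            (((m+2*j+3 - 2 * ℓ : ℕ) : ℝ) * r ^ (m+2*j+3 - 2 * ℓ - 1)))
        - (∑ ℓ ∈ Finset.range (j+1),
          (-1 : ℝ) ^ ℓ * (Nat.factorial (m+2*j+1 - ℓ) : ℝ) /
            ((Nat.factorial ℓ : ℝ) * (Nat.factorial (j - ℓ) : ℝ) * (Nat.factorial (m+j+1 - ℓ) : ℝ)) *
            (((m+2*j+1 - 2 * ℓ : ℕ) : ℝ) * r ^ (m+2*j+1 - 2 * ℓ - 1)))
      = ∑ ℓ ∈ Finset.range (j+1+1),
          ((m : ℝ)+2*j+3) * ((-1 : ℝ) ^ ℓ * (Nat.factorial (m+2*j+2 - ℓ) : ℝ) *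
            ((m+2*j+3 - 2 * ℓ : ℕ) : ℝ) /
            ((Nat.factorial ℓ : ℝ) * (Nat.factorial (j+1 - ℓ) : ℝ) * (Nat.factorial (m+j+2 - ℓ) : ℝ))) *
            r ^ (m+2*j+2 - 2 * ℓ) := by
    rw [Finset.sum_range_succ', Finset.sum_range_succ' (fun ℓ =>
          ((m : ℝ)+2*j+3) * ((-1 : ℝ) ^ ℓ * (Nat.factorial (m+2*j+2 - ℓ) : ℝ) *
            ((m+2*j+3 - 2 * ℓ : ℕ) : ℝ) /
            ((Nat.factorial ℓ : ℝ) * (Nat.factorial (j+1 - ℓ) : ℝ) * (Nat.factorial (m+j+2 - ℓ) : ℝ))) *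
            r ^ (m+2*j+2 - 2 * ℓ))]
    have h0 : (-1 : ℝ) ^ 0 * (Nat.factorial (m+2*j+3 - 0) : ℝ) /
            ((Nat.factorial 0 : ℝ) * (Nat.factorial (j+1 - 0) : ℝ) * (Nat.factorial (m+j+2 - 0) : ℝ)) *
            (((m+2*j+3 - 2 * 0 : ℕ) : ℝ) * r ^ (m+2*j+3 - 2 * 0 - 1))
        = ((m : ℝ)+2*j+3) * ((-1 : ℝ) ^ 0 * (Nat.factorial (m+2*j+2 - 0) : ℝ) *
            ((m+2*j+3 - 2 * 0 : ℕ) : ℝ) /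
            ((Nat.factorial 0 : ℝ) * (Nat.factorial (j+1 - 0) : ℝ) * (Nat.factorial (m+j+2 - 0) : ℝ))) *
            r ^ (m+2*j+2 - 2 * 0) := by
      simp only [Nat.mul_zero, Nat.sub_zero]
      rw [show m+2*j+3 = (m+2*j+2)+1 from by omega, Nat.add_sub_cancel,
          Nat.factorial_succ (m+2*j+2)]
      push_cast
      field_simp
      ring
    rw [h0]
    have hsum : ∀ ℓ ∈ Finset.range (j+1),
        (-1 : ℝ) ^ (ℓ+1) * (Nat.factorial (m+2*j+3 - (ℓ+1)) : ℝ) /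
            ((Nat.factorial (ℓ+1) : ℝ) * (Nat.factorial (j+1 - (ℓ+1)) : ℝ) * (Nat.factorial (m+j+2 - (ℓ+1)) : ℝ)) *
            (((m+2*j+3 - 2 * (ℓ+1) : ℕ) : ℝ) * r ^ (m+2*j+3 - 2 * (ℓ+1) - 1))
        - (-1 : ℝ) ^ ℓ * (Nat.factorial (m+2*j+1 - ℓ) : ℝ) /
            ((Nat.factorial ℓ : ℝ) * (Nat.factorial (j - ℓ) : ℝ) * (Nat.factorial (m+j+1 - ℓ) : ℝ)) *
            (((m+2*j+1 - 2 * ℓ : ℕ) : ℝ) * r ^ (m+2*j+1 - 2 * ℓ - 1))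
        = ((m : ℝ)+2*j+3) * ((-1 : ℝ) ^ (ℓ+1) * (Nat.factorial (m+2*j+2 - (ℓ+1)) : ℝ) *
            ((m+2*j+3 - 2 * (ℓ+1) : ℕ) : ℝ) /
            ((Nat.factorial (ℓ+1) : ℝ) * (Nat.factorial (j+1 - (ℓ+1)) : ℝ) * (Nat.factorial (m+j+2 - (ℓ+1)) : ℝ))) *
            r ^ (m+2*j+2 - 2 * (ℓ+1)) := by
      intro ℓ hℓ
      simp only [Finset.mem_range] at hℓ
      obtain ⟨i, rfl⟩ : ∃ i, j = ℓ + i := ⟨j - ℓ, by omega⟩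
      rw [show m+2*(ℓ+i)+3-2*(ℓ+1)-1 = m+2*i from by omega,
          show m+2*(ℓ+i)+3-2*(ℓ+1) = m+2*i+1 from by omega,
          show m+2*(ℓ+i)+3-(ℓ+1) = (m+ℓ+2*i+1)+1 from by omega,
          show (ℓ+i)+1-(ℓ+1) = i from by omega,
          show m+(ℓ+i)+2-(ℓ+1) = m+i+1 from by omega,
          show m+2*(ℓ+i)+1-2*ℓ-1 = m+2*i from by omega,
          show m+2*(ℓ+i)+1-2*ℓ = m+2*i+1 from by omega,
          show m+2*(ℓ+i)+1-ℓ = m+ℓ+2*i+1 from by omega,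
          show (ℓ+i)-ℓ = i from by omega,
          show m+(ℓ+i)+1-ℓ = m+i+1 from by omega,
          show m+2*(ℓ+i)+2-2*(ℓ+1) = m+2*i from by omega,
          show m+2*(ℓ+i)+2-(ℓ+1) = m+ℓ+2*i+1 from by omega,
          Nat.factorial_succ (m+ℓ+2*i+1), Nat.factorial_succ ℓ, pow_succ]
      push_cast
      field_simp
      ring
    have hs2 : ∑ ℓ ∈ Finset.range (j+1),
        ((-1 : ℝ) ^ (ℓ+1) * (Nat.factorial (m+2*j+3 - (ℓ+1)) : ℝ) /
            ((Nat.factorial (ℓ+1) : ℝ) * (Nat.factorial (j+1 - (ℓ+1)) : ℝ) * (Nat.factorial (m+j+2 - (ℓ+1)) : ℝ)) *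
            (((m+2*j+3 - 2 * (ℓ+1) : ℕ) : ℝ) * r ^ (m+2*j+3 - 2 * (ℓ+1) - 1))
        - (-1 : ℝ) ^ ℓ * (Nat.factorial (m+2*j+1 - ℓ) : ℝ) /
            ((Nat.factorial ℓ : ℝ) * (Nat.factorial (j - ℓ) : ℝ) * (Nat.factorial (m+j+1 - ℓ) : ℝ)) *
            (((m+2*j+1 - 2 * ℓ : ℕ) : ℝ) * r ^ (m+2*j+1 - 2 * ℓ - 1)))
        = ∑ ℓ ∈ Finset.range (j+1),
          ((m : ℝ)+2*j+3) * ((-1 : ℝ) ^ (ℓ+1) * (Nat.factorial (m+2*j+2 - (ℓ+1)) : ℝ) *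
            ((m+2*j+3 - 2 * (ℓ+1) : ℕ) : ℝ) /
            ((Nat.factorial (ℓ+1) : ℝ) * (Nat.factorial (j+1 - (ℓ+1)) : ℝ) * (Nat.factorial (m+j+2 - (ℓ+1)) : ℝ))) *
            r ^ (m+2*j+2 - 2 * (ℓ+1)) :=
      Finset.sum_congr rfl hsum
    rw [Finset.sum_sub_distrib] at hs2
    linarith [hs2]
  have hR : ((m : ℝ)+2*j+3) * (Rz (m+2*j+2) m r + Rz (m+2*j+2) (m+2) r)
      = ∑ ℓ ∈ Finset.range (j+1+1),
          ((m : ℝ)+2*j+3) * ((-1 : ℝ) ^ ℓ * (Nat.factorial (m+2*j+2 - ℓ) : ℝ) *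
            ((m+2*j+3 - 2 * ℓ : ℕ) : ℝ) /
            ((Nat.factorial ℓ : ℝ) * (Nat.factorial (j+1 - ℓ) : ℝ) * (Nat.factorial (m+j+2 - ℓ) : ℝ))) *
            r ^ (m+2*j+2 - 2 * ℓ) := by
    rw [Rz_eq (m+2*j+2) m (j+1) (m+j+1) (by omega) (by omega),
        Rz_eq (m+2*j+2) (m+2) j (m+j+2) (by omega) (by omega),
        Finset.sum_range_succ (fun ℓ =>
          (-1 : ℝ) ^ ℓ * (Nat.factorial (m+2*j+2 - ℓ) : ℝ) /
            ((Nat.factorial ℓ : ℝ) * (Nat.factorial (j+1 - ℓ) : ℝ) * (Nat.factorial (m+j+1 - ℓ) : ℝ)) *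
            r ^ (m+2*j+2 - 2 * ℓ)),
        Finset.sum_range_succ (fun ℓ =>
          ((m : ℝ)+2*j+3) * ((-1 : ℝ) ^ ℓ * (Nat.factorial (m+2*j+2 - ℓ) : ℝ) *
            ((m+2*j+3 - 2 * ℓ : ℕ) : ℝ) /
            ((Nat.factorial ℓ : ℝ) * (Nat.factorial (j+1 - ℓ) : ℝ) * (Nat.factorial (m+j+2 - ℓ) : ℝ))) *
            r ^ (m+2*j+2 - 2 * ℓ))]
    have hend : ((m : ℝ)+2*j+3) * ((-1 : ℝ) ^ (j+1) * (Nat.factorial (m+2*j+2 - (j+1)) : ℝ) /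
            ((Nat.factorial (j+1) : ℝ) * (Nat.factorial (j+1 - (j+1)) : ℝ) * (Nat.factorial (m+j+1 - (j+1)) : ℝ)) *
            r ^ (m+2*j+2 - 2 * (j+1)))
        = ((m : ℝ)+2*j+3) * ((-1 : ℝ) ^ (j+1) * (Nat.factorial (m+2*j+2 - (j+1)) : ℝ) *
            ((m+2*j+3 - 2 * (j+1) : ℕ) : ℝ) /
            ((Nat.factorial (j+1) : ℝ) * (Nat.factorial (j+1 - (j+1)) : ℝ) * (Nat.factorial (m+j+2 - (j+1)) : ℝ))) *
            r ^ (m+2*j+2 - 2 * (j+1)) := by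
      rw [show m+2*j+2-2*(j+1) = m from by omega,
          show m+2*j+2-(j+1) = m+j+1 from by omega,
          show m+2*j+3-2*(j+1) = m+1 from by omega,
          show j+1-(j+1) = 0 from by omega,
          show m+j+2-(j+1) = m+1 from by omega,
          show m+j+1-(j+1) = m from by omega,
          Nat.factorial_succ m]
      push_cast
      field_simp
    have hsum : ∀ ℓ ∈ Finset.range (j+1),
        ((m : ℝ)+2*j+3) * ((-1 : ℝ) ^ ℓ * (Nat.factorial (m+2*j+2 - ℓ) : ℝ) /
            ((Nat.factorial ℓ : ℝ) * (Nat.factorial (j+1 - ℓ) : ℝ) * (Nat.factorial (m+j+1 - ℓ) : ℝ)) *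
            r ^ (m+2*j+2 - 2 * ℓ)
          + (-1 : ℝ) ^ ℓ * (Nat.factorial (m+2*j+2 - ℓ) : ℝ) /
            ((Nat.factorial ℓ : ℝ) * (Nat.factorial (j - ℓ) : ℝ) * (Nat.factorial (m+j+2 - ℓ) : ℝ)) *
            r ^ (m+2*j+2 - 2 * ℓ))
        = ((m : ℝ)+2*j+3) * ((-1 : ℝ) ^ ℓ * (Nat.factorial (m+2*j+2 - ℓ) : ℝ) *
            ((m+2*j+3 - 2 * ℓ : ℕ) : ℝ) /
            ((Nat.factorial ℓ : ℝ) * (Nat.factorial (j+1 - ℓ) : ℝ) * (Nat.factorial (m+j+2 - ℓ) : ℝ))) *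
            r ^ (m+2*j+2 - 2 * ℓ) := by
      intro ℓ hℓ
      simp only [Finset.mem_range] at hℓ
      obtain ⟨i, rfl⟩ : ∃ i, j = ℓ + i := ⟨j - ℓ, by omega⟩
      rw [show m+2*(ℓ+i)+2-2*ℓ = m+2*i+2 from by omega,
          show m+2*(ℓ+i)+2-ℓ = m+ℓ+2*i+2 from by omega,
          show m+2*(ℓ+i)+3-2*ℓ = m+2*i+3 from by omega,
          show (ℓ+i)+1-ℓ = i+1 from by omega,
          show m+(ℓ+i)+2-ℓ = m+i+2 from by omega,
          show m+(ℓ+i)+1-ℓ = m+i+1 from by omega,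
          show (ℓ+i)-ℓ = i from by omega,
          Nat.factorial_succ i, Nat.factorial_succ (m+i+1)]
      push_cast
      field_simp
      ring
    have e0 := Finset.sum_congr rfl hsum
    have e1 : (∑ ℓ ∈ Finset.range (j+1),
          ((m : ℝ)+2*j+3) * ((-1 : ℝ) ^ ℓ * (Nat.factorial (m+2*j+2 - ℓ) : ℝ) *
            ((m+2*j+3 - 2 * ℓ : ℕ) : ℝ) /
            ((Nat.factorial ℓ : ℝ) * (Nat.factorial (j+1 - ℓ) : ℝ) * (Nat.factorial (m+j+2 - ℓ) : ℝ))) *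
            r ^ (m+2*j+2 - 2 * ℓ))
        = ((m : ℝ)+2*j+3) * ((∑ ℓ ∈ Finset.range (j+1),
            (-1 : ℝ) ^ ℓ * (Nat.factorial (m+2*j+2 - ℓ) : ℝ) /
              ((Nat.factorial ℓ : ℝ) * (Nat.factorial (j+1 - ℓ) : ℝ) * (Nat.factorial (m+j+1 - ℓ) : ℝ)) *
              r ^ (m+2*j+2 - 2 * ℓ))
          + ∑ ℓ ∈ Finset.range (j+1),
            (-1 : ℝ) ^ ℓ * (Nat.factorial (m+2*j+2 - ℓ) : ℝ) /
              ((Nat.factorial ℓ : ℝ) * (Nat.factorial (j - ℓ) : ℝ) * (Nat.factorial (m+j+2 - ℓ) : ℝ)) *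
              r ^ (m+2*j+2 - 2 * ℓ)) := by
      rw [← e0, ← Finset.mul_sum, Finset.sum_add_distrib]
    rw [e1, ← hend]
    ring
  rw [hD.deriv, hL, hR]

theorem zernike_derivative_identity (n m : ℕ) (hmn : m + 2 ≤ n) (heven : Even (n - m))
    (r : ℝ) :
    deriv (fun s => Rz (n + 1) (m + 1) s - Rz (n - 1) (m + 1) s) r =
      ((n : ℝ) + 1) * (Rz n m r + Rz n (m + 2) r) := by
  obtain ⟨j, rfl⟩ : ∃ j, n = m + 2 * j + 2 := by
    obtain ⟨t, ht⟩ := heven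
    exact ⟨t - 1, by omega⟩
  rw [show m + 2 * j + 2 + 1 = m + 2 * j + 3 from by omega,
      show m + 2 * j + 2 - 1 = m + 2 * j + 1 from by omega,
      key m j r]
  push_cast
  ring
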